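/- arXiv:2012.02758 — 2 statements merged into one kernel-verified Lean document; each statement's English description precedes it below -/
import Mathlib

section
/- Let A_Γ = ⟨a_σ : σ ∈ Γ⟩ be a T-algebra and let U be any ultrafilter on the Boolean subalgebra B_Γ of P(ℕ) generated by {a_σ : σ ∈ Γ}. Then there exists y ∈ X(Γ) such that U = U_y, where U_y is the ultrafilter on B_Γ generated by the finite intersections of {ℕ ∖ a_{y↾(α+1)} : α+1 ≤ λ_y}. -/
open Set

noncomputable section

/-- The least uncountable ordinal `ω₁`. -/
def omega1 : Ordinal := (Cardinal.aleph 1).ord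

/-- `⋃_{γ ∈ F} a_γ` for a finite set `F` of indices. -/
def unionFin (a : Ordinal → Set ℕ) (F : Finset Ordinal) : Set ℕ :=
  ⋃ γ ∈ F, a γ

/-- A sequence of subsets of `ℕ`, with indices from a (downward closed) domain `D`
of ordinals, is coherent if for all `α ≤ β` in the domain there is a finite `F ⊆ α`
with `a α ∩ a β ⊆ ⋃_{γ∈F} a γ` or `a α ⊆ a β ∪ ⋃_{γ∈F} a γ`. -/
def CoherentOn (D : Set Ordinal) (a : Ordinal → Set ℕ) : Prop :=
  ∀ α β : Ordinal, α ≤ β → β ∈ D →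
    ∃ F : Finset Ordinal, (∀ γ ∈ F, γ < α) ∧
      (a α ∩ a β ⊆ unionFin a F ∨ a α ⊆ a β ∪ unionFin a F)

/-- Properness: no `a β` is contained in a finite union of earlier terms. -/
def ProperOn (D : Set Ordinal) (a : Ordinal → Set ℕ) : Prop :=
  ∀ β ∈ D, ∀ F : Finset Ordinal, (∀ γ ∈ F, γ < β) → ¬ a β ⊆ unionFin a F

/-- `â_β = { α ≤ β : a α ∖ a β ⊆ ⋃_{γ∈F} a γ for some finite F ⊆ α }`. -/
def hatA (a : Ordinal → Set ℕ) (β : Ordinal) : Set Ordinal :=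
  { α | α ≤ β ∧ ∃ F : Finset Ordinal, (∀ γ ∈ F, γ < α) ∧ a α \ a β ⊆ unionFin a F }

/-- The topology `τ(A)` on `λ + 1 = {α : α ≤ λ}` generated by the subbase
consisting of the sets `â_β` and their complements, `β < λ`. -/
def tau (lam : Ordinal) (a : Ordinal → Set ℕ) :
    TopologicalSpace {α : Ordinal // α ≤ lam} :=
  TopologicalSpace.generateFrom
    { s | ∃ β < lam, s = {x : {α : Ordinal // α ≤ lam} | x.1 ∈ hatA a β} ∨
                     s = {x : {α : Ordinal // α ≤ lam} | x.1 ∈ hatA a β}ᶜ }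

/-- The subspace `ω₁ = {α : α < ω₁}` of `(ω₁+1, τ(A))`. -/
def tauSub (a : Ordinal → Set ℕ) : TopologicalSpace {y : Ordinal // y < omega1} :=
  TopologicalSpace.induced
    (fun y : {y : Ordinal // y < omega1} => (⟨y.1, y.2.le⟩ : {α : Ordinal // α ≤ omega1}))
    (tau omega1 a)

/-- Closed unbounded subsets of `ω₁`. -/
def IsClub' (C : Set Ordinal) : Prop :=
  C ⊆ Iio omega1 ∧
  (∀ α < omega1, ∃ β ∈ C, α ≤ β) ∧
  (∀ δ, δ < omega1 → δ ≠ 0 → (∀ α < δ, ∃ β ∈ C, α < β ∧ β < δ) → δ ∈ C)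

/-- Stationary subsets of `ω₁`: sets meeting every club. -/
def IsStationary' (S : Set Ordinal) : Prop :=
  ∀ C : Set Ordinal, IsClub' C → (S ∩ C).Nonempty

/-- The stationary covering property for a coherent sequence whose index domain is `D`:
if the sequence has length `ω₁` (i.e. `Iio ω₁ ⊆ D`), then every stationary `S ⊆ ω₁`
together with some finite `F` covers, i.e. `⋃_{γ ∈ S ∪ F} â_γ = ω₁`.  (Sequences of
length `< ω₁` have the ScP by convention.) -/
def HasScP (D : Set Ordinal) (a : Ordinal → Set ℕ) : Prop :=
  Iio omega1 ⊆ D →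
    ∀ S : Set Ordinal, S ⊆ Iio omega1 → IsStationary' S →
      ∃ F : Finset Ordinal, (⋃ γ ∈ S ∪ (↑F : Set Ordinal), hatA a γ) = Iio omega1

/-- A node of the tree `2^{≤ω₁}`: a function `val` defined on the ordinals `< len`
(with the canonical value `false` beyond `len`). -/
structure Node where
  len : Ordinal
  val : Ordinal → Bool
  canon : ∀ α, len ≤ α → val α = false

open Classical in
/-- The restriction `x ↾ β`. -/
def Node.restrict (x : Node) (β : Ordinal) : Node where
  len := β
  val := fun α => if α < β then x.val α else false
  canon := fun α h => if_neg (not_lt.2 h)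

/-- `τ.Extends σ` means `σ ⊆ τ`, i.e. `τ` extends `σ`. -/
def Node.Extends (τ σ : Node) : Prop :=
  σ.len ≤ τ.len ∧ ∀ α < σ.len, τ.val α = σ.val α

/-- Successor ordinals. -/
def IsSucc (o : Ordinal) : Prop := ∃ β, o = β + 1

open Classical in
/-- `σ†`: if `σ` has successor length `β+1`, the node agreeing with `σ` except at `β`;
otherwise `σ` itself. -/
def Node.dagger (σ : Node) : Node :=
  if h : IsSucc σ.len then
    { len := σ.len
      val := fun α => if α = Classical.choose h then !(σ.val α) else σ.val α
      canon := by
        intro α hα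
        have hs := Classical.choose_spec h
        have hne : α ≠ Classical.choose h := by
          intro he
          rw [hs, he] at hα
          rw [Ordinal.add_one_eq_succ] at hα
          exact absurd hα (not_le.2 (Order.lt_succ (Classical.choose h)))
        show (if α = Classical.choose h then !(σ.val α) else σ.val α) = false
        rw [if_neg hne]
        exact σ.canon α hα }
  else σ

open Classical in
/-- `σ ⌢ b` : the node `σ` extended by one value `b`. -/
def Node.snoc (σ : Node) (b : Bool) : Node where
  len := σ.len + 1
  val := fun α => if α = σ.len then b else σ.val α
  canon := by
    intro α hα
    have h1 : σ.len < α := by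
      have h2 : σ.len < σ.len + 1 := by
        rw [Ordinal.add_one_eq_succ]; exact Order.lt_succ σ.len
      exact lt_of_lt_of_le h2 hα
    show (if α = σ.len then b else σ.val α) = false
    rw [if_neg h1.ne']
    exact σ.canon α h1.le

open Classical in
/-- `x ⌢ σ` : concatenation of nodes. -/
def Node.append (x σ : Node) : Node where
  len := x.len + σ.len
  val := fun α => if α < x.len then x.val α else σ.val (α - x.len)
  canon := by
    intro α hα
    have h1 : ¬ α < x.len := not_lt.2 (le_trans (le_self_add : x.len ≤ x.len + σ.len) hα)
    show (if α < x.len then x.val α else σ.val (α - x.len)) = false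
    rw [if_neg h1]
    apply σ.canon
    by_contra h2
    rw [not_le] at h2
    have h3 : α ≤ x.len + (α - x.len) := Ordinal.le_add_sub α x.len
    have h4 : x.len + (α - x.len) < x.len + σ.len := by gcongr
    exact absurd hα (not_le.2 (lt_of_le_of_lt h3 h4))

/-- A subtree of `2^{<ω₁}` that is downward closed, twinned and has no maximal elements. -/
structure GoodTree (Γ : Set Node) : Prop where
  lt_omega1 : ∀ σ ∈ Γ, σ.len < omega1
  downward : ∀ σ ∈ Γ, ∀ β ≤ σ.len, σ.restrict β ∈ Γ
  twinned : ∀ σ ∈ Γ, σ.dagger ∈ Γ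
  noMax : ∀ σ ∈ Γ, ∃ τ ∈ Γ, σ.len < τ.len ∧ τ.Extends σ

/-- `X(Γ)`: the maximal branches of `Γ`, i.e. the minimal elements of `2^{≤ω₁} ∖ Γ`. -/
def XGamma (Γ : Set Node) : Set Node :=
  { x | x.len ≤ omega1 ∧ x ∉ Γ ∧ ∀ β < x.len, x.restrict β ∈ Γ }

/-- The index domain of the branch sequence `A_{Γ,x}`. -/
def branchDomain (Γ : Set Node) (x : Node) : Set Ordinal :=
  { α | α + 1 ≤ x.len ∧ x.restrict (α + 1) ∈ Γ }

/-- The branch sequence `A_{Γ,x}`, `a^x_α = a_{x ↾ (α+1)}`. -/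
def branchSeq (a : Node → Set ℕ) (x : Node) : Ordinal → Set ℕ :=
  fun α => a (x.restrict (α + 1))

/-- A `𝕋`-algebra on the tree `Γ`. -/
structure IsTAlgebra (Γ : Set Node) (a : Node → Set ℕ) : Prop where
  tree : GoodTree Γ
  empty_of_not_succ : ∀ σ ∈ Γ, ¬ IsSucc σ.len → a σ = ∅
  compl_dagger : ∀ σ ∈ Γ, IsSucc σ.len → a σ.dagger = (a σ)ᶜ
  branch_coherent : ∀ x : Node, x.len ≤ omega1 →
    CoherentOn (branchDomain Γ x) (branchSeq a x)
  branch_proper : ∀ x : Node, x.len ≤ omega1 →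
    ProperOn (branchDomain Γ x) (branchSeq a x)

/-- The Boolean subalgebra of `P(ℕ)` generated by a family `G`. -/
inductive GenBool (G : Set (Set ℕ)) : Set ℕ → Prop
  | basic (s : Set ℕ) : s ∈ G → GenBool G s
  | empty : GenBool G ∅
  | compl (s : Set ℕ) : GenBool G s → GenBool G sᶜ
  | inter (s t : Set ℕ) : GenBool G s → GenBool G t → GenBool G (s ∩ t)

/-- `B_Γ`: the Boolean subalgebra of `P(ℕ)` generated by `{a_σ : σ ∈ Γ}`. -/
def BGamma (Γ : Set Node) (a : Node → Set ℕ) : Set (Set ℕ) :=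
  { b | GenBool { s | ∃ σ ∈ Γ, s = a σ } b }

/-- A finite intersection from the family `{ℕ ∖ a_{x↾(α+1)} : α + 1 ≤ λ_x}`. -/
def finInterCompl (a : Node → Set ℕ) (x : Node) (F : Finset Ordinal) : Set ℕ :=
  ⋂ α ∈ F, (a (x.restrict (α + 1)))ᶜ

/-- The ultrafilter `U_x` on `B_Γ` generated by the finite intersections of
`{ℕ ∖ a_{x↾(α+1)} : α + 1 ≤ λ_x}`. -/
def Ux (Γ : Set Node) (a : Node → Set ℕ) (x : Node) : Set (Set ℕ) :=
  { b | b ∈ BGamma Γ a ∧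
    ∃ F : Finset Ordinal, (∀ α ∈ F, α + 1 ≤ x.len) ∧ finInterCompl a x F ⊆ b }

/-- The Stone topology on `X(Γ)`, with subbasic open sets `{z : b ∈ U_z}`, `b ∈ B_Γ`. -/
def stoneTop (Γ : Set Node) (a : Node → Set ℕ) :
    TopologicalSpace {z : Node // z ∈ XGamma Γ} :=
  TopologicalSpace.generateFrom
    { s | ∃ b ∈ BGamma Γ a, s = { z : {z : Node // z ∈ XGamma Γ} | b ∈ Ux Γ a z.1 } }

/-- An ultrafilter on a Boolean subalgebra `B` of `P(ℕ)`. -/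
def IsUltrafilterOn (B U : Set (Set ℕ)) : Prop :=
  U ⊆ B ∧
  (∀ s ∈ U, ∀ t ∈ U, s ∩ t ∈ U) ∧
  (∀ s ∈ U, ∀ t ∈ B, s ⊆ t → t ∈ U) ∧
  ∅ ∉ U ∧
  (∀ b ∈ B, Xor' (b ∈ U) (bᶜ ∈ U))

/-- The length-lexicographic (strict) order on finite binary strings. -/
def LenLexLT (σ τ : Node) : Prop :=
  σ.len < τ.len ∨ (σ.len = τ.len ∧ ∃ i < σ.len, σ.val i = false ∧ τ.val i = true ∧
    ∀ j < i, σ.val j = τ.val j)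

/-- `e` is the standard length-lexicographic enumeration of `2^{<ω}`. -/
def IsStdEnum (e : ℕ → Node) : Prop :=
  (∀ k, (e k).len < Ordinal.omega0) ∧
  (∀ σ : Node, σ.len < Ordinal.omega0 → ∃ k, e k = σ) ∧
  (∀ k l : ℕ, k < l → LenLexLT (e k) (e l))

/-- `⋃_{k<n} c^x_k` where `c^x_n = a^x_{e(n)} ∖ ⋃_{k<n} c^x_k` (recursively). -/
def cUnion (a : Node → Set ℕ) (x : Node) (eb : ℕ → Ordinal) : ℕ → Set ℕ
  | 0 => ∅
  | n + 1 => cUnion a x eb n ∪ (a (x.restrict (eb n + 1)) \ cUnion a x eb n)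

/-- `c^x_n = a^x_{e(n)} ∖ ⋃_{k<n} c^x_k`. -/
def cSeq (a : Node → Set ℕ) (x : Node) (eb : ℕ → Ordinal) (n : ℕ) : Set ℕ :=
  a (x.restrict (eb n + 1)) \ cUnion a x eb n

/-- `{x ⌢ σ : σ ∈ 2^{<ω}}`. -/
def appendSet (x : Node) : Set Node :=
  { τ | ∃ σ : Node, σ.len < Ordinal.omega0 ∧ τ = x.append σ }

/-- The defining equations of the extension `A_Γ[π,x]`:
`a_x = ∅`, `a_{x⌢(σ⌢0)} = ⋃{c^x_k : σ⌢1 ⊆ σ_{π(k)}}`, `a_{x⌢(σ⌢1)} = ℕ ∖ a_{x⌢(σ⌢0)}`. -/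
def ExtEquations (e : ℕ → Node) (π : ℕ → ℕ) (a : Node → Set ℕ) (x : Node)
    (eb : ℕ → Ordinal) (a' : Node → Set ℕ) : Prop :=
  a' x = ∅ ∧
  ∀ σ : Node, σ.len < Ordinal.omega0 →
    (a' (x.append (σ.snoc false)) =
      ⋃ k ∈ { k : ℕ | (e (π k)).Extends (σ.snoc true) }, cSeq a x eb k) ∧
    (a' (x.append (σ.snoc true)) = (a' (x.append (σ.snoc false)))ᶜ)

/-- The full tree `2^{<ω₁}`. -/
def GammaFull : Set Node := { σ | σ.len < omega1 }

theorem natLtOmega1 (n : ℕ) : (n : Ordinal) < omega1 := by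
  have h1 : (n : Ordinal) < Ordinal.omega0 := Ordinal.nat_lt_omega0 n
  have h2 : Ordinal.omega0 < omega1 := by
    rw [omega1, ← Cardinal.ord_aleph0]
    exact Cardinal.ord_lt_ord.2 (by rw [← Cardinal.aleph_zero]
                                    exact Cardinal.aleph_lt_aleph.2 zero_lt_one)
  exact h1.trans h2

/-!
Call `σ ∈ Γ` compatible with `U` if `U` contains `ℕ ∖ a_{σ↾(α+1)}` for every `α + 1 ≤ λ_σ`.
Compatible nodes cannot split: at the splitting level their generators are twins, hence
complementary, and `U` would contain a set and its complement. So they form a chain, and its union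
`y` lies in `X(Γ)`, because absence of maximal nodes and twinning let every compatible node grow.
Clearly `U_y ⊆ U`. Conversely `U_y` decides every generator `a_σ`: either `σ ⊆ y`, or `σ` leaves
`y` at some level `δ`, and coherence of the branch through `σ` compares `a_σ` with
`a_{σ↾(δ+1)} = ℕ ∖ a_{y↾(δ+1)}` up to finitely many generators that `σ` shares with `y`. Hence
`U_y` decides all of `B_Γ`, which forces `U = U_y`.
-/

namespace Node

theorem ext_of_len_eq {x y : Node} (hlen : x.len = y.len)
    (hval : ∀ α < x.len, x.val α = y.val α) : x = y := by
  obtain ⟨lx, vx, cx⟩ := x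
  obtain ⟨ly, vy, cy⟩ := y
  dsimp only at hlen hval
  subst hlen
  obtain rfl : vx = vy := funext fun α =>
    if h : α < lx then hval α h else by rw [cx α (not_lt.1 h), cy α (not_lt.1 h)]
  rfl

@[simp]
theorem restrict_len (x : Node) (β : Ordinal) : (x.restrict β).len = β := rfl

theorem restrict_val_of_lt (x : Node) {α β : Ordinal} (h : α < β) :
    (x.restrict β).val α = x.val α := if_pos h

theorem restrict_eq_restrict_iff {x y : Node} {β : Ordinal} :
    x.restrict β = y.restrict β ↔ ∀ α < β, x.val α = y.val α := by
  refine ⟨fun h α hα => ?_, fun h => ext_of_len_eq rfl fun α (hα : α < β) => ?_⟩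
  · rw [← x.restrict_val_of_lt hα, h, y.restrict_val_of_lt hα]
  · rw [x.restrict_val_of_lt hα, y.restrict_val_of_lt hα, h α hα]

@[simp]
theorem restrict_len_self (x : Node) : x.restrict x.len = x :=
  ext_of_len_eq rfl fun _ hα => x.restrict_val_of_lt hα

theorem restrict_restrict (x : Node) {β γ : Ordinal} (h : β ≤ γ) :
    (x.restrict γ).restrict β = x.restrict β :=
  restrict_eq_restrict_iff.2 fun _ hα => x.restrict_val_of_lt (hα.trans_le h)

theorem restrict_congr {x y : Node} {β γ : Ordinal} (h : x.restrict γ = y.restrict γ)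
    (hβ : β ≤ γ) : x.restrict β = y.restrict β := by
  rw [← x.restrict_restrict hβ, h, y.restrict_restrict hβ]

theorem dagger_of_len_eq_add_one {σ : Node} {δ : Ordinal} (h : σ.len = δ + 1) :
    σ.dagger.len = δ + 1 ∧
      ∀ α, σ.dagger.val α = if α = δ then !σ.val α else σ.val α := by
  have hs : IsSucc σ.len := ⟨δ, h⟩
  have hδ : Classical.choose hs = δ := by
    refine Order.succ_injective ?_
    simpa only [Order.succ_eq_add_one] using (Classical.choose_spec hs).symm.trans h
  refine ⟨by simp only [Node.dagger, dif_pos hs, h], fun α => ?_⟩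
  simp only [Node.dagger, dif_pos hs, hδ]

theorem restrict_dagger_of_len_eq_add_one {σ : Node} {δ : Ordinal} (h : σ.len = δ + 1) :
    σ.dagger.restrict δ = σ.restrict δ := by
  refine restrict_eq_restrict_iff.2 fun α hα => ?_
  rw [(dagger_of_len_eq_add_one h).2, if_neg hα.ne]

theorem dagger_dagger {σ : Node} {δ : Ordinal} (h : σ.len = δ + 1) : σ.dagger.dagger = σ := by
  obtain ⟨hlen, hval⟩ := dagger_of_len_eq_add_one h
  obtain ⟨hlen', hval'⟩ := dagger_of_len_eq_add_one hlen
  refine ext_of_len_eq (hlen'.trans h.symm) fun α _ => ?_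
  rw [hval', hval]
  split_ifs <;> simp only [Bool.not_not]

theorem restrict_add_one_eq_dagger {x y : Node} {δ : Ordinal}
    (hagree : x.restrict δ = y.restrict δ) (hne : x.val δ ≠ y.val δ) :
    x.restrict (δ + 1) = (y.restrict (δ + 1)).dagger := by
  obtain ⟨hlen, hval⟩ := dagger_of_len_eq_add_one (y.restrict_len (δ + 1))
  refine ext_of_len_eq hlen.symm fun α (hα : α < δ + 1) => ?_
  have hαδ : α ≤ δ := Order.lt_add_one_iff.1 hα
  rw [hval, x.restrict_val_of_lt hα, y.restrict_val_of_lt hα]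
  rcases hαδ.eq_or_lt with rfl | hlt
  · rw [if_pos rfl]
    revert hne
    cases x.val α <;> cases y.val α <;> decide
  · rw [if_neg hlt.ne]
    exact restrict_eq_restrict_iff.1 hagree α hlt

theorem restrict_eq_or_exists_dagger (x y : Node) (β : Ordinal) :
    x.restrict β = y.restrict β ∨
      ∃ δ < β, x.restrict δ = y.restrict δ ∧
        x.restrict (δ + 1) = (y.restrict (δ + 1)).dagger := by
  by_cases h : ∀ α < β, x.val α = y.val α
  · exact Or.inl (restrict_eq_restrict_iff.2 h)
  push Not at h
  obtain ⟨δ, ⟨hδβ, hne⟩, hmin⟩ := Ordinal.lt_wf.has_min _ h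
  have hagree : x.restrict δ = y.restrict δ := restrict_eq_restrict_iff.2 fun α hα =>
    by_contra fun hne' => hmin α ⟨hα.trans hδβ, hne'⟩ hα
  exact Or.inr ⟨δ, hδβ, hagree, restrict_add_one_eq_dagger hagree hne⟩

open Classical in
/-- Meant for pairwise compatible nodes of bounded length; the guard `α < len` keeps `canon` true
when the lengths are unbounded and `sSup` is junk. -/
def sup (C : Set Node) : Node where
  len := sSup (len '' C)
  val α := decide (α < sSup (len '' C) ∧ ∃ σ ∈ C, σ.val α = true)
  canon _ hα := decide_eq_false fun h => (not_lt.2 hα) h.1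

variable {C : Set Node}

theorem le_sup_len (hC : BddAbove (len '' C)) {σ : Node} (hσ : σ ∈ C) :
    σ.len ≤ (sup C).len :=
  le_csSup hC ⟨σ, hσ, rfl⟩

theorem exists_lt_len_of_lt_sup_len {α : Ordinal} (hα : α < (sup C).len) :
    ∃ σ ∈ C, α < σ.len := by
  obtain ⟨_, ⟨σ, hσ, rfl⟩, hlt⟩ := exists_lt_of_lt_csSup' hα
  exact ⟨σ, hσ, hlt⟩

open Classical in
theorem sup_val_eq_true_iff {α : Ordinal} :
    (sup C).val α = true ↔ α < (sup C).len ∧ ∃ σ ∈ C, σ.val α = true :=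
  decide_eq_true_iff

theorem lt_len_of_val_eq_true {σ : Node} {α : Ordinal} (h : σ.val α = true) : α < σ.len :=
  not_le.1 fun hle => by rw [σ.canon α hle] at h; contradiction

theorem sup_restrict (hC : BddAbove (len '' C))
    (hcompat : ∀ σ ∈ C, ∀ τ ∈ C, ∀ α < σ.len, α < τ.len → σ.val α = τ.val α)
    {σ : Node} (hσ : σ ∈ C) : (sup C).restrict σ.len = σ := by
  refine ext_of_len_eq rfl fun α (hα : α < σ.len) => ?_
  rw [restrict_val_of_lt _ hα]
  refine Bool.eq_iff_iff.2 (sup_val_eq_true_iff.trans ⟨fun ⟨_, τ, hτ, hτv⟩ => ?_, fun hv => ?_⟩)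
  · rwa [hcompat σ hσ τ hτ α hα (lt_len_of_val_eq_true hτv)]
  · exact ⟨hα.trans_le (le_sup_len hC hσ), σ, hσ, hv⟩

end Node

namespace IsUltrafilterOn

variable {B U : Set (Set ℕ)}

theorem compl_notMem (hU : IsUltrafilterOn B U) {s : Set ℕ} (hs : s ∈ U) : sᶜ ∉ U := fun hsc =>
  hU.2.2.2.1 (inter_compl_self s ▸ hU.2.1 s hs sᶜ hsc)

theorem univ_mem (hU : IsUltrafilterOn B U) (hB : ∅ ∈ B) : univ ∈ U := by
  rcases hU.2.2.2.2 ∅ hB with ⟨h, -⟩ | ⟨h, -⟩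
  · exact absurd h hU.2.2.2.1
  · rwa [compl_empty] at h

theorem biInter_mem (hU : IsUltrafilterOn B U) (hB : ∅ ∈ B) {ι : Type*} {s : ι → Set ℕ}
    (F : Finset ι) (hF : ∀ i ∈ F, s i ∈ U) : ⋂ i ∈ F, s i ∈ U := by
  classical
  induction F using Finset.induction with
  | empty => simpa only [Finset.notMem_empty, iInter_of_empty, iInter_univ] using hU.univ_mem hB
  | insert i F _ ih =>
    rw [Finset.set_biInter_insert]
    exact hU.2.1 _ (hF i (Finset.mem_insert_self i F)) _
      (ih fun j hj => hF j (Finset.mem_insert_of_mem hj))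

theorem eq_of_subset (hU : IsUltrafilterOn B U) {V : Set (Set ℕ)} (hVU : V ⊆ U)
    (hV : ∀ b ∈ B, b ∈ V ∨ bᶜ ∈ V) : U = V := by
  refine Subset.antisymm (fun b hb => ?_) hVU
  exact (hV b (hU.1 hb)).resolve_right fun hbc => hU.compl_notMem hb (hVU hbc)

end IsUltrafilterOn

section Ux

variable {Γ : Set Node} {a : Node → Set ℕ} {y : Node}

theorem empty_mem_BGamma : ∅ ∈ BGamma Γ a := GenBool.empty

theorem mem_BGamma {σ : Node} (hσ : σ ∈ Γ) : a σ ∈ BGamma Γ a := GenBool.basic _ ⟨σ, hσ, rfl⟩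

theorem compl_mem_BGamma {b : Set ℕ} (hb : b ∈ BGamma Γ a) : bᶜ ∈ BGamma Γ a :=
  GenBool.compl _ hb

theorem finInterCompl_eq_compl_unionFin (F : Finset Ordinal) :
    finInterCompl a y F = (unionFin (branchSeq a y) F)ᶜ := by
  simp only [finInterCompl, unionFin, branchSeq, compl_iUnion]

theorem univ_mem_Ux : univ ∈ Ux Γ a y :=
  ⟨compl_empty (α := ℕ) ▸ compl_mem_BGamma empty_mem_BGamma, ∅, by simp, subset_univ _⟩

theorem inter_mem_Ux {s t : Set ℕ} (hs : s ∈ Ux Γ a y) (ht : t ∈ Ux Γ a y) :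
    s ∩ t ∈ Ux Γ a y := by
  classical
  obtain ⟨hsB, F, hF, hFs⟩ := hs
  obtain ⟨htB, G, hG, hGt⟩ := ht
  refine ⟨GenBool.inter s t hsB htB, F ∪ G, fun α hα => ?_, ?_⟩
  · rcases Finset.mem_union.1 hα with h | h
    exacts [hF α h, hG α h]
  · rw [finInterCompl, Finset.set_biInter_inter]
    exact inter_subset_inter hFs hGt

theorem mem_Ux_of_subset {s t : Set ℕ} (hs : s ∈ Ux Γ a y) (ht : t ∈ BGamma Γ a)
    (hst : s ⊆ t) : t ∈ Ux Γ a y :=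
  ⟨ht, hs.2.imp fun _ hF => ⟨hF.1, hF.2.trans hst⟩⟩

theorem mem_or_compl_mem_Ux (hgen : ∀ σ ∈ Γ, a σ ∈ Ux Γ a y ∨ (a σ)ᶜ ∈ Ux Γ a y)
    {b : Set ℕ} (hb : b ∈ BGamma Γ a) : b ∈ Ux Γ a y ∨ bᶜ ∈ Ux Γ a y := by
  induction hb with
  | basic s hs =>
    obtain ⟨σ, hσ, rfl⟩ := hs
    exact hgen σ hσ
  | empty => exact Or.inr (compl_empty (α := ℕ) ▸ univ_mem_Ux)
  | compl s _ ih => rwa [compl_compl, or_comm]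
  | inter s t hs ht ihs iht =>
    rcases ihs with hs' | hs'
    · rcases iht with ht' | ht'
      · exact Or.inl (inter_mem_Ux hs' ht')
      · exact Or.inr (mem_Ux_of_subset ht' (compl_mem_BGamma (GenBool.inter s t hs ht))
          (compl_subset_compl.2 inter_subset_right))
    · exact Or.inr (mem_Ux_of_subset hs' (compl_mem_BGamma (GenBool.inter s t hs ht))
        (compl_subset_compl.2 inter_subset_left))

theorem Ux_subset {U : Set (Set ℕ)} (hU : IsUltrafilterOn (BGamma Γ a) U)
    (hy : ∀ α, α + 1 ≤ y.len → (a (y.restrict (α + 1)))ᶜ ∈ U) : Ux Γ a y ⊆ U := by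
  rintro b ⟨hb, F, hF, hFb⟩
  exact hU.2.2.1 _ (hU.biInter_mem empty_mem_BGamma F fun α hα => hy α (hF α hα)) b hb hFb

end Ux

theorem GoodTree.lt_len_of_restrict_eq {Γ : Set Node} (hΓ : GoodTree Γ) {σ y : Node}
    {δ : Ordinal} (hσ : σ ∈ Γ) (hy : y ∉ Γ) (hδ : δ ≤ σ.len)
    (h : σ.restrict δ = y.restrict δ) : δ < y.len := by
  by_contra! hle
  refine hy ?_
  rw [← y.restrict_len_self, ← Node.restrict_congr h hle]
  exact hΓ.downward σ hσ _ (hle.trans hδ)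

namespace IsTAlgebra

variable {Γ : Set Node} {a : Node → Set ℕ} {σ y : Node}

/-- Coherence of the branch of `σ` between `δ` and `β` compares `a σ` with
`a_{σ↾(δ+1)} = ℕ ∖ a_{y↾(δ+1)}` up to finitely many generators below `δ`, which `σ` shares
with `y`. -/
theorem mem_or_compl_mem_Ux_of_dagger (hT : IsTAlgebra Γ a) {β δ : Ordinal} (hσ : σ ∈ Γ)
    (hβ : σ.len = β + 1) (hδβ : δ ≤ β) (hδy : δ < y.len) (hyδ : y.restrict (δ + 1) ∈ Γ)
    (hagree : σ.restrict δ = y.restrict δ)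
    (hdag : σ.restrict (δ + 1) = (y.restrict (δ + 1)).dagger) :
    a σ ∈ Ux Γ a y ∨ (a σ)ᶜ ∈ Ux Γ a y := by
  classical
  have hβD : β ∈ branchDomain Γ σ := ⟨hβ.ge, by rwa [← hβ, Node.restrict_len_self]⟩
  obtain ⟨F, hF, hcoh⟩ := hT.branch_coherent σ (hT.tree.lt_omega1 σ hσ).le δ β hδβ hβD
  have hseqβ : branchSeq a σ β = a σ := by rw [branchSeq, ← hβ, Node.restrict_len_self]
  have hseqδ : branchSeq a σ δ = (branchSeq a y δ)ᶜ := by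
    rw [branchSeq, hdag]
    exact hT.compl_dagger _ hyδ ⟨δ, rfl⟩
  have hseqF : unionFin (branchSeq a σ) F = unionFin (branchSeq a y) F :=
    iUnion₂_congr fun γ hγ =>
      congrArg a (Node.restrict_congr hagree (Order.add_one_le_of_lt (hF γ hγ)))
  have hfin : finInterCompl a y (insert δ F) = branchSeq a σ δ \ unionFin (branchSeq a σ) F := by
    rw [finInterCompl_eq_compl_unionFin, unionFin, Finset.set_biUnion_insert, hseqδ, hseqF,
      compl_union, sdiff_eq, unionFin]
  have hlen : ∀ α ∈ insert δ F, α + 1 ≤ y.len := fun α hα =>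
    Order.add_one_le_of_lt <| (Finset.mem_insert.1 hα).elim (· ▸ hδy) fun h => (hF α h).trans hδy
  rw [hseqβ] at hcoh
  rcases hcoh with h | h
  · refine Or.inr ⟨compl_mem_BGamma (mem_BGamma hσ), insert δ F, hlen, ?_⟩
    rw [hfin]
    exact fun n hn hnσ => hn.2 (h ⟨hn.1, hnσ⟩)
  · refine Or.inl ⟨mem_BGamma hσ, insert δ F, hlen, ?_⟩
    rw [hfin, sdiff_subset_iff, union_comm]
    exact h

theorem mem_or_compl_mem_Ux_of_mem (hT : IsTAlgebra Γ a) (hy : y ∉ Γ) (hσ : σ ∈ Γ) :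
    a σ ∈ Ux Γ a y ∨ (a σ)ᶜ ∈ Ux Γ a y := by
  by_cases hs : IsSucc σ.len
  swap
  · rw [hT.empty_of_not_succ σ hσ hs, compl_empty]
    exact Or.inr univ_mem_Ux
  obtain ⟨β, hβ⟩ := hs
  rcases Node.restrict_eq_or_exists_dagger σ y (β + 1) with h | ⟨δ, hδβ, hagree, hdag⟩
  · have hβy : β + 1 ≤ y.len := (hT.tree.lt_len_of_restrict_eq hσ hy hβ.ge h).le
    refine Or.inr ⟨compl_mem_BGamma (mem_BGamma hσ), {β}, by simpa using hβy, ?_⟩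
    rw [finInterCompl, Finset.set_biInter_singleton, ← h, ← hβ, Node.restrict_len_self]
  · have hδy := hT.tree.lt_len_of_restrict_eq hσ hy (hβ ▸ hδβ.le) hagree
    have hyδ : y.restrict (δ + 1) ∈ Γ := by
      rw [← Node.dagger_dagger (y.restrict_len (δ + 1)), ← hdag]
      exact hT.tree.twinned _ (hT.tree.downward σ hσ _ (hβ ▸ Order.add_one_le_of_lt hδβ))
    exact hT.mem_or_compl_mem_Ux_of_dagger hσ hβ (Order.lt_add_one_iff.1 hδβ) hδy hyδ hagree hdag

end IsTAlgebra

def compatNodes (Γ : Set Node) (a : Node → Set ℕ) (U : Set (Set ℕ)) : Set Node :=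
  { σ | σ ∈ Γ ∧ ∀ α, α + 1 ≤ σ.len → (a (σ.restrict (α + 1)))ᶜ ∈ U }

section compatNodes

open Node

variable {Γ : Set Node} {a : Node → Set ℕ} {U : Set (Set ℕ)} {σ τ : Node}

theorem restrict_mem_compatNodes (hΓ : GoodTree Γ) (hσ : σ ∈ compatNodes Γ a U) {β : Ordinal}
    (hβ : β ≤ σ.len) : σ.restrict β ∈ compatNodes Γ a U :=
  ⟨hΓ.downward σ hσ.1 β hβ, fun α hα => by
    rw [restrict_restrict σ (show α + 1 ≤ β from hα)]
    exact hσ.2 α (hα.trans hβ)⟩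

theorem omega1_mem_upperBounds_len_compatNodes (hΓ : GoodTree Γ) :
    omega1 ∈ upperBounds (len '' compatNodes Γ a U) := by
  rintro _ ⟨σ, hσ, rfl⟩
  exact (hΓ.lt_omega1 σ hσ.1).le

theorem bddAbove_len_compatNodes (hΓ : GoodTree Γ) : BddAbove (len '' compatNodes Γ a U) :=
  ⟨omega1, omega1_mem_upperBounds_len_compatNodes hΓ⟩

theorem val_eq_of_mem_compatNodes (hT : IsTAlgebra Γ a) (hU : IsUltrafilterOn (BGamma Γ a) U)
    (hσ : σ ∈ compatNodes Γ a U) (hτ : τ ∈ compatNodes Γ a U) {α : Ordinal}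
    (hασ : α < σ.len) (hατ : α < τ.len) : σ.val α = τ.val α := by
  rcases restrict_eq_or_exists_dagger σ τ (α + 1) with h | ⟨δ, hδα, -, hdag⟩
  · exact restrict_eq_restrict_iff.1 h α (Order.lt_add_one_iff.2 le_rfl)
  have hδα : δ ≤ α := Order.lt_add_one_iff.1 hδα
  have hδσ : δ + 1 ≤ σ.len := Order.add_one_le_of_lt (hδα.trans_lt hασ)
  have hδτ : δ + 1 ≤ τ.len := Order.add_one_le_of_lt (hδα.trans_lt hατ)
  have hσU := hσ.2 δ hδσ
  rw [hdag, hT.compl_dagger _ (hT.tree.downward τ hτ.1 _ hδτ) ⟨δ, rfl⟩, compl_compl] at hσU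
  exact absurd (hτ.2 δ hδτ) (hU.compl_notMem hσU)

/-- Of the twin children `c`, `c†` of `σ` one is compatible, as `U` contains `a_c` or
`a_{c†} = ℕ ∖ a_c`. -/
theorem exists_mem_compatNodes_len_eq_add_one (hT : IsTAlgebra Γ a)
    (hU : IsUltrafilterOn (BGamma Γ a) U) (hσ : σ ∈ compatNodes Γ a U) :
    ∃ τ ∈ compatNodes Γ a U, τ.len = σ.len + 1 := by
  obtain ⟨ρ, hρ, hlen, hext⟩ := hT.tree.noMax σ hσ.1
  set c := ρ.restrict (σ.len + 1)
  have hc : c ∈ Γ := hT.tree.downward ρ hρ _ (Order.add_one_le_of_lt hlen)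
  have hcσ : c.restrict σ.len = σ := by
    rw [restrict_restrict _ le_self_add]
    exact ext_of_len_eq rfl fun α (hα : α < σ.len) =>
      (ρ.restrict_val_of_lt hα).trans (hext.2 α hα)
  obtain ⟨τ, hτ, hτlen, hτσ, hτU⟩ :
      ∃ τ ∈ Γ, τ.len = σ.len + 1 ∧ τ.restrict σ.len = σ ∧ (a τ)ᶜ ∈ U := by
    rcases hU.2.2.2.2 (a c) (mem_BGamma hc) with ⟨h, -⟩ | ⟨h, -⟩
    · refine ⟨c.dagger, hT.tree.twinned c hc, (dagger_of_len_eq_add_one rfl).1,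
        by rw [restrict_dagger_of_len_eq_add_one rfl, hcσ], ?_⟩
      rwa [hT.compl_dagger c hc ⟨σ.len, rfl⟩, compl_compl]
    · exact ⟨c, hc, rfl, hcσ, h⟩
  refine ⟨τ, ⟨hτ, fun α hα => ?_⟩, hτlen⟩
  rcases (hτlen ▸ hα).eq_or_lt with h | h
  · rwa [h, ← hτlen, restrict_len_self]
  · have hασ : α + 1 ≤ σ.len := Order.lt_add_one_iff.1 h
    rw [← restrict_restrict τ hασ, hτσ]
    exact hσ.2 α hασ

theorem restrict_add_one_sup_mem_compatNodes (hT : IsTAlgebra Γ a)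
    (hU : IsUltrafilterOn (BGamma Γ a) U) {α : Ordinal}
    (hα : α < (sup (compatNodes Γ a U)).len) :
    (sup (compatNodes Γ a U)).restrict (α + 1) ∈ compatNodes Γ a U := by
  obtain ⟨σ, hσ, hασ⟩ := exists_lt_len_of_lt_sup_len hα
  have hle : α + 1 ≤ σ.len := Order.add_one_le_of_lt hασ
  rw [← restrict_restrict _ hle, sup_restrict (bddAbove_len_compatNodes hT.tree)
    (fun _ h₁ _ h₂ _ => val_eq_of_mem_compatNodes hT hU h₁ h₂) hσ]
  exact restrict_mem_compatNodes hT.tree hσ hle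

theorem compl_mem_of_sup_compatNodes (hT : IsTAlgebra Γ a)
    (hU : IsUltrafilterOn (BGamma Γ a) U) {α : Ordinal}
    (hα : α + 1 ≤ (sup (compatNodes Γ a U)).len) :
    (a ((sup (compatNodes Γ a U)).restrict (α + 1)))ᶜ ∈ U := by
  have h := (restrict_add_one_sup_mem_compatNodes hT hU (Order.add_one_le_iff.1 hα)).2 α le_rfl
  rwa [restrict_restrict _ le_rfl] at h

theorem sup_compatNodes_notMem (hT : IsTAlgebra Γ a) (hU : IsUltrafilterOn (BGamma Γ a) U) :
    sup (compatNodes Γ a U) ∉ Γ := fun hy => by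
  obtain ⟨τ, hτ, hτlen⟩ := exists_mem_compatNodes_len_eq_add_one hT hU
    ⟨hy, fun α hα => compl_mem_of_sup_compatNodes hT hU hα⟩
  have := le_sup_len (bddAbove_len_compatNodes hT.tree) hτ
  rw [hτlen, Order.add_one_le_iff] at this
  exact this.false

theorem sup_compatNodes_mem_XGamma (hT : IsTAlgebra Γ a) (hU : IsUltrafilterOn (BGamma Γ a) U) :
    sup (compatNodes Γ a U) ∈ XGamma Γ := by
  refine ⟨csSup_le' (omega1_mem_upperBounds_len_compatNodes hT.tree), sup_compatNodes_notMem hT hU,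
    fun β hβ => ?_⟩
  rw [← restrict_restrict _ le_self_add]
  exact hT.tree.downward _ (restrict_add_one_sup_mem_compatNodes hT hU hβ).1 β le_self_add

end compatNodes

/-- Every ultrafilter `U` on the Boolean subalgebra `B_Γ` generated by a
`𝕋`-algebra `A_Γ` is of the form `U_y` for some `y ∈ X(Γ)`. -/
theorem stmt4 (Γ : Set Node) (a : Node → Set ℕ) (hT : IsTAlgebra Γ a)
    (U : Set (Set ℕ)) (hU : IsUltrafilterOn (BGamma Γ a) U) :
    ∃ y ∈ XGamma Γ, U = Ux Γ a y := by
  set y := Node.sup (compatNodes Γ a U)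
  have hUy : Ux Γ a y ⊆ U := Ux_subset hU fun _ hα => compl_mem_of_sup_compatNodes hT hU hα
  have hdecide : ∀ b ∈ BGamma Γ a, b ∈ Ux Γ a y ∨ bᶜ ∈ Ux Γ a y := fun _ =>
    mem_or_compl_mem_Ux fun _ => hT.mem_or_compl_mem_Ux_of_mem (sup_compatNodes_notMem hT hU)
  exact ⟨y, sup_compatNodes_mem_XGamma hT hU, hU.eq_of_subset hUy hdecide⟩
end
end

section
/- Let A_Γ be a T-algebra, fix for each infinite limit ordinal λ < ω₁ a bijection e_λ : ℕ → λ, let π : ℕ → ℕ be a permutation, and let Y ⊆ X(Γ,ℵ₀). If for each y ∈ Y the extension A_Γ[π,y] (built over Γ^y = Γ ∪ {y⌢σ : σ ∈ 2^{<ω}} using e_{λ_y}) is a T-algebra, then A_Γ[π,Y] = ⋃_{y∈Y} A_Γ[π,y] is a T-algebra on Γ^Y = ⋃_{y∈Y} Γ^y. -/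
open Set

noncomputable section

/-! A `𝕋`-algebra condition only ever looks at one node of the tree at a time (the top node
of a branch segment for coherence and properness), so it survives taking a union of trees
that carry the same family `a`. -/

theorem CoherentOn.iUnion {ι : Sort*} {D : ι → Set Ordinal} {a : Ordinal → Set ℕ}
    (h : ∀ i, CoherentOn (D i) a) : CoherentOn (⋃ i, D i) a := by
  intro α β hαβ hβ
  obtain ⟨i, hβi⟩ := mem_iUnion.1 hβ
  exact h i α β hαβ hβi

theorem ProperOn.iUnion {ι : Sort*} {D : ι → Set Ordinal} {a : Ordinal → Set ℕ}
    (h : ∀ i, ProperOn (D i) a) : ProperOn (⋃ i, D i) a := by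
  intro β hβ
  obtain ⟨i, hβi⟩ := mem_iUnion.1 hβ
  exact h i β hβi

theorem branchDomain_iUnion {ι : Sort*} (Γ : ι → Set Node) (x : Node) :
    branchDomain (⋃ i, Γ i) x = ⋃ i, branchDomain (Γ i) x := by
  ext α
  simp only [branchDomain, mem_ofPred_eq, mem_iUnion, exists_and_left]

theorem GoodTree.iUnion {ι : Sort*} {Γ : ι → Set Node} (h : ∀ i, GoodTree (Γ i)) :
    GoodTree (⋃ i, Γ i) where
  lt_omega1 σ hσ := by
    obtain ⟨i, hσi⟩ := mem_iUnion.1 hσ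
    exact (h i).lt_omega1 σ hσi
  downward σ hσ β hβ := by
    obtain ⟨i, hσi⟩ := mem_iUnion.1 hσ
    exact mem_iUnion.2 ⟨i, (h i).downward σ hσi β hβ⟩
  twinned σ hσ := by
    obtain ⟨i, hσi⟩ := mem_iUnion.1 hσ
    exact mem_iUnion.2 ⟨i, (h i).twinned σ hσi⟩
  noMax σ hσ := by
    obtain ⟨i, hσi⟩ := mem_iUnion.1 hσ
    obtain ⟨τ, hτi, hlen, hext⟩ := (h i).noMax σ hσi
    exact ⟨τ, mem_iUnion.2 ⟨i, hτi⟩, hlen, hext⟩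

theorem IsTAlgebra.iUnion {ι : Sort*} {Γ : ι → Set Node} {a : Node → Set ℕ}
    (h : ∀ i, IsTAlgebra (Γ i) a) : IsTAlgebra (⋃ i, Γ i) a where
  tree := GoodTree.iUnion fun i => (h i).tree
  empty_of_not_succ σ hσ hns := by
    obtain ⟨i, hσi⟩ := mem_iUnion.1 hσ
    exact (h i).empty_of_not_succ σ hσi hns
  compl_dagger σ hσ hs := by
    obtain ⟨i, hσi⟩ := mem_iUnion.1 hσ
    exact (h i).compl_dagger σ hσi hs
  branch_coherent x hx := by
    rw [branchDomain_iUnion]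
    exact CoherentOn.iUnion fun i => (h i).branch_coherent x hx
  branch_proper x hx := by
    rw [branchDomain_iUnion]
    exact ProperOn.iUnion fun i => (h i).branch_proper x hx

theorem stmt14_general (Γ : Set Node)
    (Y : Set Node)
    (a' : Node → Set ℕ)
    (hext : ∀ y ∈ Y, IsTAlgebra (Γ ∪ appendSet y) a') :
    IsTAlgebra (⋃ y ∈ Y, (Γ ∪ appendSet y)) a' :=
  IsTAlgebra.iUnion fun y => IsTAlgebra.iUnion fun hy => hext y hy

/-- If for each `y` in a set `Y ⊆ X(Γ,ℵ₀)` of countable maximal branches the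
extension `A_Γ[π,y]` is a `𝕋`-algebra, then `A_Γ[π,Y] = ⋃_{y∈Y} A_Γ[π,y]` is a
`𝕋`-algebra on `Γ^Y = ⋃_{y∈Y} Γ^y`. -/
theorem stmt14 (Γ : Set Node) (a : Node → Set ℕ) (hT : IsTAlgebra Γ a)
    (e : ℕ → Node) (he : IsStdEnum e)
    (π : ℕ → ℕ) (hπ : Function.Bijective π)
    (eb : Ordinal → ℕ → Ordinal)
    (heb : ∀ lam : Ordinal, Ordinal.omega0 ≤ lam → lam < omega1 → Order.IsSuccLimit lam →
      Function.Injective (eb lam) ∧ (∀ n, eb lam n < lam) ∧ ∀ α < lam, ∃ n, eb lam n = α)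
    (Y : Set Node) (hY : Y ⊆ XGamma Γ) (hYcount : ∀ y ∈ Y, y.len < omega1)
    (a' : Node → Set ℕ) (haΓ : ∀ σ ∈ Γ, a' σ = a σ)
    (heq : ∀ y ∈ Y, ExtEquations e π a y (eb y.len) a')
    (hext : ∀ y ∈ Y, IsTAlgebra (Γ ∪ appendSet y) a') :
    IsTAlgebra (⋃ y ∈ Y, (Γ ∪ appendSet y)) a' :=
  stmt14_general Γ Y a' hext
end
end
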